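/- Let x* ∈ ℝⁿ with support J = supp(x*). Suppose there exists a vector c ∈ ℝⁿ such that ⟨P e_i, c⟩ = ‖P e_i‖₂ · sgn(x*_i) for every i ∈ J and |⟨P e_i, c⟩| < ‖P e_i‖₂ for every i ∉ J. Then every minimizer y of the weighted ℓ1 norm ‖W x‖₁ = Σ_{i=1}^n w_i |x_i| over all x ∈ ℝⁿ satisfying A x = A x* has supp(y) ⊆ supp(x*). -/

import Mathlib

open scoped RealInnerProductSpace Classical

/-- The `i`-th standard basis vector of `ℝⁿ`. -/
noncomputable def stdBasis (n : ℕ) (i : Fin n) : EuclideanSpace ℝ (Fin n) :=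
  EuclideanSpace.single i 1

/-- `P`: the orthogonal projection of `ℝⁿ` onto the orthogonal complement of `ker A`
(this equals `A†A` for the Moore–Penrose pseudoinverse `A†`). -/
noncomputable def proj {m n : ℕ} (A : EuclideanSpace ℝ (Fin n) →ₗ[ℝ] EuclideanSpace ℝ (Fin m))
    (x : EuclideanSpace ℝ (Fin n)) : EuclideanSpace ℝ (Fin n) :=
  (Submodule.orthogonalProjection (LinearMap.ker A)ᗮ x : EuclideanSpace ℝ (Fin n))

/-- The weights `w i = ‖P e_i‖₂`. -/
noncomputable def wgt {m n : ℕ} (A : EuclideanSpace ℝ (Fin n) →ₗ[ℝ] EuclideanSpace ℝ (Fin m))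
    (i : Fin n) : ℝ :=
  ‖proj A (stdBasis n i)‖

/-- The weighted ℓ¹ norm `‖W x‖₁ = ∑ i, w i * |x i|`. -/
noncomputable def wl1 {m n : ℕ} (A : EuclideanSpace ℝ (Fin n) →ₗ[ℝ] EuclideanSpace ℝ (Fin m))
    (x : EuclideanSpace ℝ (Fin n)) : ℝ :=
  ∑ i, wgt A i * |x i|

/-!
`P c` is a dual certificate. Since `P` is self-adjoint and `P y = P x*` for every feasible `y`,
`⟨y, P c⟩ = ⟨x*, P c⟩ = ‖W x*‖₁`, the last step because `P c` matches the weighted signs of `x*`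
on its support. On the other hand `|(P c)_i| ≤ w_i` for all `i`, strictly off the support, so
`⟨y, P c⟩ < ‖W y‖₁` as soon as `y` has an entry off the support, contradicting minimality of `y`.
-/

namespace Real

theorem self_mul_sign (r : ℝ) : r * sign r = |r| := by
  obtain hn | rfl | hp := lt_trichotomy r 0
  · rw [sign_of_neg hn, abs_of_neg hn, mul_neg_one]
  · simp
  · rw [sign_of_pos hp, abs_of_pos hp, mul_one]

theorem abs_sign_le_one (r : ℝ) : |sign r| ≤ 1 := by
  obtain h | h | h := sign_apply_eq r <;> simp [h]

end Real

section DualCertificate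

variable {ι : Type*} [Fintype ι] {w v x y : ι → ℝ}

theorem sum_mul_eq_sum_mul_abs_of_eq_mul_sign
    (hx : ∀ i, x i ≠ 0 → v i = w i * Real.sign (x i)) :
    ∑ i, x i * v i = ∑ i, w i * |x i| := by
  refine Finset.sum_congr rfl fun i _ => ?_
  by_cases hi : x i = 0
  · simp [hi]
  · rw [hx i hi, ← Real.self_mul_sign]
    ring

theorem sum_mul_lt_sum_mul_abs (hv : ∀ i, |v i| ≤ w i) {k : ι} (hk : |v k| < w k)
    (hyk : y k ≠ 0) : ∑ i, y i * v i < ∑ i, w i * |y i| :=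
  calc ∑ i, y i * v i ≤ ∑ i, |v i| * |y i| :=
        Finset.sum_le_sum fun i _ => by
          rw [mul_comm, ← abs_mul]
          exact le_abs_self _
    _ < ∑ i, w i * |y i| :=
        Finset.sum_lt_sum (fun i _ => mul_le_mul_of_nonneg_right (hv i) (abs_nonneg _))
          ⟨k, Finset.mem_univ k, mul_lt_mul_of_pos_right hk (abs_pos.mpr hyk)⟩

theorem eq_zero_of_dual_certificate (hv : ∀ i, |v i| ≤ w i)
    (hx : ∀ i, x i ≠ 0 → v i = w i * Real.sign (x i))
    (hpair : ∑ i, y i * v i = ∑ i, x i * v i)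
    (hmin : ∑ i, w i * |y i| ≤ ∑ i, w i * |x i|) {k : ι} (hk : |v k| < w k) : y k = 0 := by
  by_contra hyk
  have := sum_mul_lt_sum_mul_abs hv hk hyk
  rw [hpair, sum_mul_eq_sum_mul_abs_of_eq_mul_sign hx] at this
  linarith

end DualCertificate

section Projection

variable {m n : ℕ} (A : EuclideanSpace ℝ (Fin n) →ₗ[ℝ] EuclideanSpace ℝ (Fin m))

theorem proj_eq_starProjection (x : EuclideanSpace ℝ (Fin n)) :
    proj A x = (LinearMap.ker A)ᗮ.starProjection x :=
  rfl

theorem inner_proj_left (x c : EuclideanSpace ℝ (Fin n)) :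
    ⟪proj A x, c⟫ = ∑ i, x i * proj A c i := by
  rw [proj_eq_starProjection, Submodule.inner_starProjection_left_eq_right,
    ← proj_eq_starProjection, PiLp.inner_apply]
  simp [mul_comm]

theorem inner_proj_stdBasis (c : EuclideanSpace ℝ (Fin n)) (i : Fin n) :
    ⟪proj A (stdBasis n i), c⟫ = proj A c i := by
  simp [inner_proj_left, stdBasis]

theorem proj_eq_of_map_eq {x y : EuclideanSpace ℝ (Fin n)} (h : A x = A y) :
    proj A x = proj A y := by
  have hker : x - y ∈ LinearMap.ker A := by simp [LinearMap.mem_ker, h]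
  rw [← sub_eq_zero, proj_eq_starProjection, proj_eq_starProjection, ← map_sub,
    Submodule.starProjection_apply_eq_zero_iff, Submodule.orthogonal_orthogonal]
  exact hker

end Projection

theorem stmt1_general {m n : ℕ}
    (A : EuclideanSpace ℝ (Fin n) →ₗ[ℝ] EuclideanSpace ℝ (Fin m))
    (xstar c : EuclideanSpace ℝ (Fin n))
    (hc1 : ∀ i, xstar i ≠ 0 →
      ⟪proj A (stdBasis n i), c⟫ = ‖proj A (stdBasis n i)‖ * Real.sign (xstar i))
    (hc2 : ∀ i, xstar i = 0 →
      |⟪proj A (stdBasis n i), c⟫| < ‖proj A (stdBasis n i)‖)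
    (y : EuclideanSpace ℝ (Fin n)) (hfeas : A y = A xstar)
    (hmin : ∀ x : EuclideanSpace ℝ (Fin n), A x = A xstar → wl1 A y ≤ wl1 A x) :
    ∀ k, y k ≠ 0 → xstar k ≠ 0 := by
  intro k hyk hk
  simp only [inner_proj_stdBasis] at hc1 hc2
  have hle : ∀ i, |proj A c i| ≤ wgt A i := fun i => by
    by_cases hi : xstar i = 0
    · exact (hc2 i hi).le
    · rw [hc1 i hi, abs_mul, abs_norm]
      exact mul_le_of_le_one_right (norm_nonneg _) (Real.abs_sign_le_one _)
  have hpair : ∑ i, y i * proj A c i = ∑ i, xstar i * proj A c i := by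
    rw [← inner_proj_left, ← inner_proj_left, proj_eq_of_map_eq A hfeas]
  exact hyk (eq_zero_of_dual_certificate hle hc1 hpair (hmin xstar rfl) (hc2 k hk))

theorem stmt1 {m n : ℕ}
    (A : EuclideanSpace ℝ (Fin n) →ₗ[ℝ] EuclideanSpace ℝ (Fin m))
    (hA : ∀ i, stdBasis n i ∉ LinearMap.ker A)
    (xstar c : EuclideanSpace ℝ (Fin n))
    (hc1 : ∀ i, xstar i ≠ 0 →
      ⟪proj A (stdBasis n i), c⟫ = ‖proj A (stdBasis n i)‖ * Real.sign (xstar i))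
    (hc2 : ∀ i, xstar i = 0 →
      |⟪proj A (stdBasis n i), c⟫| < ‖proj A (stdBasis n i)‖)
    (y : EuclideanSpace ℝ (Fin n)) (hfeas : A y = A xstar)
    (hmin : ∀ x : EuclideanSpace ℝ (Fin n), A x = A xstar → wl1 A y ≤ wl1 A x) :
    ∀ k, y k ≠ 0 → xstar k ≠ 0 :=
  stmt1_general A xstar c hc1 hc2 y hfeas hmin
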